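/- arXiv:1511.00106 — 2 statements merged into one kernel-verified Lean document; each statement's English description precedes it below -/
import Mathlib

section
/- Assume the balance condition α + γ > 1 and set δ = 1 − 1/α + γ/α > 0. For every T > 0 there exists C > 0 such that for all t ∈ [0,T], s ∈ [0,t], and x, y ∈ ℝ^d, one has e^{−C t^δ} |x − θ_t^0(y)| − C t^{1/α + δ} ≤ |υ_{t−s}^{t−s}(x) − θ_s^0(y)| ≤ e^{C t^δ} |x − θ_t^0(y)| + C t^{1/α + δ}. -/
/-!
Written as an average of `b` against the standard Gaussian at scale `t ^ (1 / α)`, the mollified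
drift inherits the Hölder bound of `b` and differs from `b` by `O(t ^ (γ / α))`. Hence
`f r = υ_r - θ_{t-r}` satisfies `‖f'‖ ≤ C₀ ‖f‖ ^ γ + O(t ^ (γ / α))` on `[0, t - s]`, and Young's
inequality `‖f‖ ^ γ ≤ t ^ ((γ - 1) / α) ‖f‖ + t ^ (γ / α)` makes this linear in `‖f‖`. Grönwall's
inequality, run forwards and backwards in time, gives both bounds, because
`t * t ^ ((γ - 1) / α) = t ^ δ` and `t * t ^ (γ / α) = t ^ (1 / α + δ)`.
-/

open MeasureTheory Real Set

/-- `Euc d` is the Euclidean space `ℝ^d`. -/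
abbrev Euc (d : ℕ) := EuclideanSpace ℝ (Fin d)

/-- The Gaussian mollification `b(t,x)` of the drift `b` at scale `t^{1/α}`:
`b(t,x) = (2π)^{-d/2} t^{-d/α} ∫ b(z) exp(-|z-x|²/(2 t^{2/α})) dz` for `t > 0`
(with the natural boundary value `b(x)` for `t ≤ 0`). -/
noncomputable def moll (d : ℕ) (α : ℝ) (b : Euc d → Euc d) (t : ℝ) (x : Euc d) : Euc d :=
  if t ≤ 0 then b x
  else ((2 * Real.pi) ^ (-(d : ℝ) / 2) * t ^ (-(d : ℝ) / α)) •
    ∫ z : Euc d, Real.exp (-‖z - x‖ ^ 2 / (2 * t ^ (2 / α))) • b z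

/-- `IsSol F x0 f` : `f` solves the Cauchy problem `f' (t) = F t (f t)` on `[0,∞)`, `f 0 = x0`. -/
def IsSol (d : ℕ) (F : ℝ → Euc d → Euc d) (x0 : Euc d) (f : ℝ → Euc d) : Prop :=
  f 0 = x0 ∧ ∀ t : ℝ, 0 ≤ t → HasDerivWithinAt f (F t (f t)) (Set.Ici 0) t

open Module

section StdGaussian

variable {V : Type*} [NormedAddCommGroup V] [InnerProductSpace ℝ V]

variable (V) in
noncomputable def stdGaussianDensity (v : V) : ℝ :=
  (2 * π) ^ (-(finrank ℝ V : ℝ) / 2) * exp (-‖v‖ ^ 2 / 2)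

lemma stdGaussianDensity_nonneg (v : V) : 0 ≤ stdGaussianDensity V v := by
  unfold stdGaussianDensity; positivity

variable [FiniteDimensional ℝ V] [MeasurableSpace V] [BorelSpace V]

lemma integrable_exp_neg_mul_sq_norm {c : ℝ} (hc : 0 < c) :
    Integrable (fun v : V => exp (-c * ‖v‖ ^ 2)) :=
  Integrable.of_integral_ne_zero <| by
    rw [GaussianFourier.integral_rexp_neg_mul_sq_norm hc]; positivity

lemma integral_exp_neg_sq_norm_div {c : ℝ} (hc : 0 < c) :
    ∫ v : V, exp (-‖v‖ ^ 2 / c) = (π * c) ^ ((finrank ℝ V : ℝ) / 2) := by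
  simp_rw [neg_div, div_eq_inv_mul, ← neg_mul]
  rw [GaussianFourier.integral_rexp_neg_mul_sq_norm (inv_pos.2 hc), div_inv_eq_mul, div_eq_inv_mul]

lemma integrable_stdGaussianDensity : Integrable (stdGaussianDensity V) := by
  refine ((integrable_exp_neg_mul_sq_norm (V := V) one_half_pos).const_mul
    ((2 * π) ^ (-(finrank ℝ V : ℝ) / 2))).congr (.of_forall fun v => ?_)
  simp only [stdGaussianDensity]; ring_nf

lemma integral_stdGaussianDensity : ∫ v, stdGaussianDensity V v = 1 := by
  simp only [stdGaussianDensity]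
  rw [integral_const_mul, integral_exp_neg_sq_norm_div two_pos, mul_comm π, neg_div,
    Real.rpow_neg (by positivity), inv_mul_cancel₀ (by positivity)]

lemma integral_stdGaussianDensity_mul_exp :
    ∫ v, stdGaussianDensity V v * exp (‖v‖ ^ 2 / 4) = 2 ^ ((finrank ℝ V : ℝ) / 2) := by
  have hexp (v : V) : exp (-‖v‖ ^ 2 / 2) * exp (‖v‖ ^ 2 / 4) = exp (-‖v‖ ^ 2 / 4) := by
    rw [← exp_add]; ring_nf
  simp only [stdGaussianDensity, mul_assoc, hexp]
  rw [integral_const_mul, integral_exp_neg_sq_norm_div four_pos, neg_div,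
    Real.rpow_neg (by positivity), inv_mul_eq_div, ← Real.div_rpow (by positivity) (by positivity)]
  congr 1
  field_simp
  norm_num

end StdGaussian

lemma rpow_le_exp_sq_div_four {x γ : ℝ} (hx : 0 ≤ x) (hγ0 : 0 ≤ γ) (hγ1 : γ ≤ 1) :
    x ^ γ ≤ exp (x ^ 2 / 4) := by
  rcases le_total x 1 with hx1 | hx1
  · exact (rpow_le_one hx hx1 hγ0).trans (one_le_exp (by positivity))
  · calc x ^ γ ≤ x ^ (1 : ℝ) := rpow_le_rpow_of_exponent_le hx1 hγ1
      _ ≤ x ^ 2 / 4 + 1 := by rw [rpow_one]; nlinarith [sq_nonneg (x - 2)]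
      _ ≤ exp (x ^ 2 / 4) := add_one_le_exp _

lemma rpow_le_rpow_sub_one_mul_add_rpow {g l γ : ℝ} (hg : 0 ≤ g) (hl : 0 < l) (hγ0 : 0 ≤ γ)
    (hγ1 : γ ≤ 1) : g ^ γ ≤ l ^ (γ - 1) * g + l ^ γ := by
  rcases le_total g l with hgl | hlg
  · have := rpow_le_rpow hg hgl hγ0
    have : 0 ≤ l ^ (γ - 1) * g := by positivity
    linarith
  · have hg0 : 0 < g := hl.trans_le hlg
    calc g ^ γ = g ^ (γ - 1) * g := by
          rw [← rpow_add_one hg0.ne']; ring_nf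
      _ ≤ l ^ (γ - 1) * g :=
          mul_le_mul_of_nonneg_right (rpow_le_rpow_of_nonpos hl hlg (by linarith)) hg
      _ ≤ l ^ (γ - 1) * g + l ^ γ := le_add_of_nonneg_right (by positivity)

lemma continuous_of_norm_sub_le_rpow {E F : Type*} [NormedAddCommGroup E] [NormedAddCommGroup F]
    {f : E → F} {C γ : ℝ} (hγ : 0 < γ) (hf : ∀ x y, ‖f x - f y‖ ≤ C * ‖x - y‖ ^ γ) :
    Continuous f := by
  refine continuous_iff_continuousAt.2 fun x₀ => tendsto_iff_norm_sub_tendsto_zero.2 ?_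
  refine squeeze_zero (fun _ => norm_nonneg _) (fun x => hf x x₀) ?_
  have : Continuous fun x => C * ‖x - x₀‖ ^ γ := by fun_prop (disch := exact hγ.le)
  simpa [zero_rpow hγ.ne'] using this.tendsto x₀

section Mollifier

variable {d : ℕ} {α γ C₀ : ℝ} {b : Euc d → Euc d}

lemma moll_eq_integral_stdGaussianDensity (hα : 0 < α) {t : ℝ} (ht : 0 ≤ t) (x : Euc d) :
    moll d α b t x = ∫ v, stdGaussianDensity (Euc d) v • b (x + t ^ (1 / α) • v) := by
  rcases ht.eq_or_lt with rfl | ht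
  · rw [zero_rpow (one_div_pos.2 hα).ne']
    simp [moll, integral_smul_const, integral_stdGaussianDensity]
  set σ := t ^ (1 / α)
  have hσ : 0 < σ := rpow_pos_of_pos ht _
  have hσd : t ^ (-(d : ℝ) / α) * σ ^ d = 1 := by
    rw [← rpow_natCast, ← rpow_mul ht.le, ← rpow_add ht]; field_simp; simp
  have hσ2 (v : Euc d) : ‖σ • v‖ ^ 2 / (2 * t ^ (2 / α)) = ‖v‖ ^ 2 / 2 := by
    rw [norm_smul, norm_of_nonneg hσ.le, mul_pow, ← rpow_natCast, ← rpow_mul ht.le]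
    field_simp; norm_num; ring
  have hsubst : ∫ z : Euc d, exp (-‖z - x‖ ^ 2 / (2 * t ^ (2 / α))) • b z =
      σ ^ d • ∫ v : Euc d, exp (-‖v‖ ^ 2 / 2) • b (x + σ • v) := by
    rw [← integral_add_left_eq_self _ x]
    have := Measure.integral_comp_smul_of_nonneg volume
      (fun w : Euc d => exp (-‖w‖ ^ 2 / (2 * t ^ (2 / α))) • b (x + w)) σ (hR := hσ.le)
    simp only [neg_div, hσ2, add_sub_cancel_left, finrank_euclideanSpace_fin] at this ⊢
    rw [this, smul_smul, mul_inv_cancel₀ (by positivity), one_smul]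
  rw [moll, if_neg ht.not_ge, hsubst, smul_smul, mul_assoc, hσd, mul_one, ← integral_smul]
  simp only [smul_smul, stdGaussianDensity, finrank_euclideanSpace_fin]

lemma integrable_stdGaussianDensity_smul_comp (hγ : 0 < γ) (hb_bdd : ∀ x, ‖b x‖ ≤ C₀)
    (hb_hol : ∀ x y, ‖b x - b y‖ ≤ C₀ * ‖x - y‖ ^ γ) (x : Euc d) (σ : ℝ) :
    Integrable fun v => stdGaussianDensity (Euc d) v • b (x + σ • v) :=
  integrable_stdGaussianDensity.smul_bdd C₀
    ((continuous_of_norm_sub_le_rpow hγ hb_hol).comp (by fun_prop)).aestronglyMeasurable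
    (.of_forall fun _ => hb_bdd _)

lemma norm_moll_sub_moll_le (hα : 0 < α) (hγ : 0 < γ) (hb_bdd : ∀ x, ‖b x‖ ≤ C₀)
    (hb_hol : ∀ x y, ‖b x - b y‖ ≤ C₀ * ‖x - y‖ ^ γ) {t : ℝ} (ht : 0 ≤ t) (x y : Euc d) :
    ‖moll d α b t x - moll d α b t y‖ ≤ C₀ * ‖x - y‖ ^ γ := by
  rw [moll_eq_integral_stdGaussianDensity hα ht, moll_eq_integral_stdGaussianDensity hα ht,
    ← integral_sub (integrable_stdGaussianDensity_smul_comp hγ hb_bdd hb_hol _ _)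
      (integrable_stdGaussianDensity_smul_comp hγ hb_bdd hb_hol _ _)]
  calc _ ≤ ∫ v, stdGaussianDensity (Euc d) v * (C₀ * ‖x - y‖ ^ γ) := by
        refine norm_integral_le_of_norm_le (integrable_stdGaussianDensity.mul_const _)
          (.of_forall fun v => ?_)
        rw [← smul_sub, norm_smul, norm_of_nonneg (stdGaussianDensity_nonneg v)]
        gcongr
        · exact stdGaussianDensity_nonneg v
        · simpa only [add_sub_add_right_eq_sub] using
            hb_hol (x + t ^ (1 / α) • v) (y + t ^ (1 / α) • v)
    _ = C₀ * ‖x - y‖ ^ γ := by rw [integral_mul_const, integral_stdGaussianDensity, one_mul]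

lemma norm_moll_sub_le (hα : 0 < α) (hγ0 : 0 < γ) (hγ1 : γ ≤ 1) (hb_bdd : ∀ x, ‖b x‖ ≤ C₀)
    (hb_hol : ∀ x y, ‖b x - b y‖ ≤ C₀ * ‖x - y‖ ^ γ) {t : ℝ} (ht : 0 ≤ t) (x : Euc d) :
    ‖moll d α b t x - b x‖ ≤ 2 ^ ((d : ℝ) / 2) * C₀ * t ^ (γ / α) := by
  have hC₀ : 0 ≤ C₀ := (norm_nonneg _).trans (hb_bdd 0)
  set σ := t ^ (1 / α)
  have hσ : 0 ≤ σ := rpow_nonneg ht _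
  have hσγ : σ ^ γ = t ^ (γ / α) := by rw [← rpow_mul ht]; ring_nf
  -- `‖v‖ ^ γ ≤ exp (‖v‖ ^ 2 / 4)` replaces the `γ`-th Gaussian moment by an explicit integral.
  have hmoment := integral_stdGaussianDensity_mul_exp (V := Euc d)
  rw [finrank_euclideanSpace_fin] at hmoment
  have hint : Integrable fun v : Euc d => stdGaussianDensity (Euc d) v * exp (‖v‖ ^ 2 / 4) :=
    .of_integral_ne_zero (by rw [hmoment]; positivity)
  have hbx : b x = ∫ v, stdGaussianDensity (Euc d) v • b x := by
    rw [integral_smul_const, integral_stdGaussianDensity, one_smul]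
  rw [moll_eq_integral_stdGaussianDensity hα ht, hbx, ← integral_sub
    (integrable_stdGaussianDensity_smul_comp hγ0 hb_bdd hb_hol _ _)
    (integrable_stdGaussianDensity.smul_const _)]
  calc _ ≤ ∫ v, C₀ * σ ^ γ * (stdGaussianDensity (Euc d) v * exp (‖v‖ ^ 2 / 4)) := by
        refine norm_integral_le_of_norm_le (hint.const_mul _) (.of_forall fun v => ?_)
        have hnorm : ‖σ • v‖ ^ γ ≤ σ ^ γ * exp (‖v‖ ^ 2 / 4) := by
          rw [norm_smul, norm_of_nonneg hσ, mul_rpow hσ (norm_nonneg v)]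
          gcongr
          exact rpow_le_exp_sq_div_four (norm_nonneg v) hγ0.le hγ1
        rw [← smul_sub, norm_smul, norm_of_nonneg (stdGaussianDensity_nonneg v)]
        calc _ ≤ stdGaussianDensity (Euc d) v * (C₀ * (σ ^ γ * exp (‖v‖ ^ 2 / 4))) := by
              gcongr
              · exact stdGaussianDensity_nonneg v
              · refine (hb_hol (x + σ • v) x).trans ?_
                rw [add_sub_cancel_left]
                exact mul_le_mul_of_nonneg_left hnorm hC₀
          _ = _ := by ring
    _ = 2 ^ ((d : ℝ) / 2) * C₀ * t ^ (γ / α) := by rw [integral_const_mul, hmoment, hσγ]; ring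

lemma norm_moll_sub_moll_le_of_mem_Icc (hα : 0 < α) (hγ0 : 0 < γ) (hγ1 : γ ≤ 1)
    (hb_bdd : ∀ x, ‖b x‖ ≤ C₀) (hb_hol : ∀ x y, ‖b x - b y‖ ≤ C₀ * ‖x - y‖ ^ γ)
    {t t₁ t₂ : ℝ} (ht : 0 < t) (ht₁ : t₁ ∈ Icc 0 t) (ht₂ : t₂ ∈ Icc 0 t) (x y : Euc d) :
    ‖moll d α b t₁ x - moll d α b t₂ y‖ ≤
      C₀ * t ^ ((γ - 1) / α) * ‖x - y‖ + (1 + 2 * 2 ^ ((d : ℝ) / 2)) * C₀ * t ^ (γ / α) := by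
  have hC₀ : 0 ≤ C₀ := (norm_nonneg _).trans (hb_bdd 0)
  have hl : 0 < t ^ (1 / α) := rpow_pos_of_pos ht _
  have hyoung := rpow_le_rpow_sub_one_mul_add_rpow (norm_nonneg (x - y)) hl hγ0.le hγ1
  rw [← rpow_mul ht.le, ← rpow_mul ht.le, one_div_mul_eq_div, one_div_mul_eq_div] at hyoung
  have hpow (τ : ℝ) (hτ : τ ∈ Icc 0 t) : τ ^ (γ / α) ≤ t ^ (γ / α) :=
    rpow_le_rpow hτ.1 hτ.2 (by positivity)
  have h₁ := norm_moll_sub_le hα hγ0 hγ1 hb_bdd hb_hol ht₁.1 y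
  have h₂ := norm_moll_sub_le hα hγ0 hγ1 hb_bdd hb_hol ht₂.1 y
  have h₃ := norm_moll_sub_moll_le hα hγ0 hb_bdd hb_hol ht₁.1 x y
  have htri : ‖moll d α b t₁ x - moll d α b t₂ y‖ ≤ ‖moll d α b t₁ x - moll d α b t₁ y‖ +
      ‖moll d α b t₁ y - b y‖ + ‖moll d α b t₂ y - b y‖ := by
    have := norm_sub_le_norm_sub_add_norm_sub (moll d α b t₁ x) (moll d α b t₁ y)
      (moll d α b t₂ y)
    have := norm_sub_le_norm_sub_add_norm_sub (moll d α b t₁ y) (b y) (moll d α b t₂ y)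
    rw [norm_sub_rev (b y)] at this
    linarith
  have := mul_le_mul_of_nonneg_left hyoung hC₀
  have := mul_le_mul_of_nonneg_left (hpow t₁ ht₁) (by positivity : 0 ≤ 2 ^ ((d : ℝ) / 2) * C₀)
  have := mul_le_mul_of_nonneg_left (hpow t₂ ht₂) (by positivity : 0 ≤ 2 ^ ((d : ℝ) / 2) * C₀)
  linarith

end Mollifier

section Gronwall

variable {E : Type*} [NormedAddCommGroup E] [NormedSpace ℝ E]

lemma gronwallBound_le_add_mul_mul_exp {δ K ε x : ℝ} (hK : 0 ≤ K) (hε : 0 ≤ ε) :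
    gronwallBound δ K ε x ≤ (δ + ε * x) * exp (K * x) := by
  rcases hK.eq_or_lt with rfl | hK
  · simp [gronwallBound_K0]
  rw [gronwallBound_of_K_ne_0 hK.ne']
  have hexp : exp (K * x) - 1 ≤ K * x * exp (K * x) := by
    have h := mul_le_mul_of_nonneg_right (add_one_le_exp (-(K * x))) (exp_pos (K * x)).le
    rw [← exp_add, neg_add_cancel, exp_zero] at h
    linarith
  have : ε / K * (exp (K * x) - 1) ≤ ε * x * exp (K * x) := by
    rw [div_mul_eq_mul_div, div_le_iff₀ hK]
    nlinarith
  linarith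

lemma norm_right_le_of_norm_deriv_le {f f' : ℝ → E} {K ε L : ℝ} (hK : 0 ≤ K) (hε : 0 ≤ ε)
    (hL : 0 ≤ L) (hf : ∀ r ∈ Icc 0 L, HasDerivWithinAt f (f' r) (Icc 0 L) r)
    (hbound : ∀ r ∈ Icc 0 L, ‖f' r‖ ≤ K * ‖f r‖ + ε) :
    ‖f L‖ ≤ (‖f 0‖ + ε * L) * exp (K * L) := by
  have := norm_le_gronwallBound_of_norm_deriv_right_le (fun r hr => (hf r hr).continuousWithinAt)
    (fun r hr => (hf r (Ico_subset_Icc_self hr)).mono_of_mem_nhdsWithin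
      (Icc_mem_nhdsGE_of_mem hr)) le_rfl (fun r hr => hbound r (Ico_subset_Icc_self hr))
    L ⟨hL, le_rfl⟩
  rw [sub_zero] at this
  exact this.trans (gronwallBound_le_add_mul_mul_exp hK hε)

lemma norm_left_le_of_norm_deriv_le {f f' : ℝ → E} {K ε L : ℝ} (hK : 0 ≤ K) (hε : 0 ≤ ε)
    (hL : 0 ≤ L) (hf : ∀ r ∈ Icc 0 L, HasDerivWithinAt f (f' r) (Icc 0 L) r)
    (hbound : ∀ r ∈ Icc 0 L, ‖f' r‖ ≤ K * ‖f r‖ + ε) :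
    ‖f 0‖ ≤ (‖f L‖ + ε * L) * exp (K * L) := by
  have hmem {r : ℝ} (hr : r ∈ Icc 0 L) : L - r ∈ Icc 0 L := ⟨by linarith [hr.2], by linarith [hr.1]⟩
  have := norm_right_le_of_norm_deriv_le (f := fun r => f (L - r)) (f' := fun r => -f' (L - r))
    hK hε hL (fun r hr => ?_) (fun r hr => by simpa using hbound _ (hmem hr))
  · simpa using this
  simpa [Function.comp_def] using
    (hf _ (hmem hr)).scomp r ((hasDerivWithinAt_id r _).const_sub L) fun _ => hmem

end Gronwall

lemma IsSol.hasDerivWithinAt_comp_const_sub {d : ℕ} {F : ℝ → Euc d → Euc d} {x₀ : Euc d}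
    {f : ℝ → Euc d} (hf : IsSol d F x₀ f) {t r : ℝ} (hr : r ≤ t) :
    HasDerivWithinAt (fun r => f (t - r)) (-F (t - r) (f (t - r))) (Iic t) r := by
  simpa [Function.comp_def] using (hf.2 (t - r) (sub_nonneg.2 hr)).scomp r
    ((hasDerivWithinAt_id r (Iic t)).const_sub t) fun _ hr' => sub_nonneg.2 (mem_Iic.1 hr')

lemma exp_neg_mul_sub_le_and_le_exp_mul_add {a b ε κ ε' κ' : ℝ} (hb : 0 ≤ b) (hκ : κ ≤ κ')
    (hε : ε ≤ ε') (hεκ : ε * exp κ ≤ ε') (hfwd : a ≤ (b + ε) * exp κ)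
    (hbwd : b ≤ (a + ε) * exp κ) :
    exp (-κ') * b - ε' ≤ a ∧ a ≤ exp κ' * b + ε' := by
  constructor
  · have h : exp (-κ) * b ≤ a + ε := by
      calc exp (-κ) * b ≤ exp (-κ) * ((a + ε) * exp κ) := by gcongr
        _ = a + ε := by rw [mul_comm, mul_assoc, ← exp_add, add_neg_cancel, exp_zero, mul_one]
    have : exp (-κ') * b ≤ exp (-κ) * b := by gcongr
    linarith
  · have : exp κ * b ≤ exp κ' * b := by gcongr
    nlinarith

lemma approximate_flow_gronwall_bounds {d : ℕ} {α γ C₀ : ℝ} {b : Euc d → Euc d} (hα : 0 < α)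
    (hγ0 : 0 < γ) (hγ1 : γ ≤ 1) (hb_bdd : ∀ x, ‖b x‖ ≤ C₀)
    (hb_hol : ∀ x y, ‖b x - b y‖ ≤ C₀ * ‖x - y‖ ^ γ) {t s : ℝ} (ht : 0 < t) (hs : s ∈ Icc 0 t)
    {x y : Euc d} {u θ : ℝ → Euc d} (hu : IsSol d (fun τ z => moll d α b |τ - (t - s)| z) x u)
    (hθ : IsSol d (fun τ z => -moll d α b |τ| z) y θ) :
    ‖u (t - s) - θ s‖ ≤ (‖x - θ t‖ + (1 + 2 * 2 ^ ((d : ℝ) / 2)) * C₀ * t ^ (γ / α) * t) *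
        exp (C₀ * t ^ ((γ - 1) / α) * t) ∧
      ‖x - θ t‖ ≤ (‖u (t - s) - θ s‖ + (1 + 2 * 2 ^ ((d : ℝ) / 2)) * C₀ * t ^ (γ / α) * t) *
        exp (C₀ * t ^ ((γ - 1) / α) * t) := by
  have hC₀ : 0 ≤ C₀ := (norm_nonneg _).trans (hb_bdd 0)
  obtain ⟨hL, hLt⟩ : 0 ≤ t - s ∧ t - s ≤ t := ⟨by linarith [hs.2], by linarith [hs.1]⟩
  have hderiv (r : ℝ) (hr : r ∈ Icc 0 (t - s)) : HasDerivWithinAt (fun r => u r - θ (t - r))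
      (moll d α b |r - (t - s)| (u r) - moll d α b |t - r| (θ (t - r))) (Icc 0 (t - s)) r := by
    simpa using ((hu.2 r hr.1).mono Icc_subset_Ici_self).fun_sub
      ((hθ.hasDerivWithinAt_comp_const_sub (hr.2.trans hLt)).mono fun _ hr' => hr'.2.trans hLt)
  have hbound (r : ℝ) (hr : r ∈ Icc 0 (t - s)) :
      ‖moll d α b |r - (t - s)| (u r) - moll d α b |t - r| (θ (t - r))‖ ≤
        C₀ * t ^ ((γ - 1) / α) * ‖u r - θ (t - r)‖ +
          (1 + 2 * 2 ^ ((d : ℝ) / 2)) * C₀ * t ^ (γ / α) :=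
    norm_moll_sub_moll_le_of_mem_Icc hα hγ0 hγ1 hb_bdd hb_hol ht
      ⟨abs_nonneg _, abs_le.2 ⟨by linarith [hr.1], by linarith [hr.2]⟩⟩
      ⟨abs_nonneg _, abs_le.2 ⟨by linarith [hr.2], by linarith [hr.1]⟩⟩ _ _
  have hK : 0 ≤ C₀ * t ^ ((γ - 1) / α) := by positivity
  have hε : 0 ≤ (1 + 2 * 2 ^ ((d : ℝ) / 2)) * C₀ * t ^ (γ / α) := by positivity
  have hfwd := norm_right_le_of_norm_deriv_le hK hε hL hderiv hbound
  have hbwd := norm_left_le_of_norm_deriv_le hK hε hL hderiv hbound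
  simp only [sub_zero, sub_sub_cancel, hu.1] at hfwd hbwd
  constructor
  · refine hfwd.trans ?_
    gcongr
  · refine hbwd.trans ?_
    gcongr

theorem approximate_flow_comparison_general
    (d : ℕ) (α γ C₀ : ℝ)
    (hα : α ∈ Set.Ioo (0 : ℝ) 2) (hγ : γ ∈ Set.Ioc (0 : ℝ) 1) (hC₀ : 0 < C₀)
    (b : Euc d → Euc d)
    (hb_bdd : ∀ x, ‖b x‖ ≤ C₀)
    (hb_hol : ∀ x y, ‖b x - b y‖ ≤ C₀ * ‖x - y‖ ^ γ)
    (hbal : 1 < α + γ)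
    (δ : ℝ) (hδ : δ = 1 - 1 / α + γ / α) :
    ∀ T > (0 : ℝ), ∃ C > (0 : ℝ),
      ∀ t ∈ Set.Icc (0 : ℝ) T, ∀ s ∈ Set.Icc (0 : ℝ) t, ∀ x y : Euc d,
      ∀ u : ℝ → Euc d, IsSol d (fun τ z => moll d α b |τ - (t - s)| z) x u →
      ∀ θ : ℝ → Euc d, IsSol d (fun τ z => -moll d α b |τ| z) y θ →
        Real.exp (-(C * t ^ δ)) * ‖x - θ t‖ - C * t ^ (1 / α + δ) ≤ ‖u (t - s) - θ s‖ ∧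
        ‖u (t - s) - θ s‖ ≤ Real.exp (C * t ^ δ) * ‖x - θ t‖ + C * t ^ (1 / α + δ) := by
  obtain ⟨hα0, -⟩ := hα
  obtain ⟨hγ0, hγ1⟩ := hγ
  have hδ0 : 0 < δ := by
    rw [hδ, show 1 - 1 / α + γ / α = (α + γ - 1) / α by field_simp; ring]
    exact div_pos (by linarith) hα0
  intro T hT
  set A := (1 + 2 * 2 ^ ((d : ℝ) / 2)) * C₀
  refine ⟨C₀ + A * exp (C₀ * T ^ δ), by positivity, ?_⟩
  rintro t ⟨ht0, htT⟩ s hs x y u hu θ hθ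
  rcases ht0.eq_or_lt with rfl | ht
  · obtain rfl : s = 0 := le_antisymm hs.2 hs.1
    simp [zero_rpow hδ0.ne', zero_rpow (by positivity : α⁻¹ + δ ≠ 0), hu.1]
  obtain ⟨hfwd, hbwd⟩ := approximate_flow_gronwall_bounds hα0 hγ0 hγ1 hb_bdd hb_hol ht hs hu hθ
  have hKt : C₀ * t ^ ((γ - 1) / α) * t = C₀ * t ^ δ := by
    rw [mul_assoc, ← rpow_add_one ht.ne', hδ]; ring_nf
  have hεt : A * t ^ (γ / α) * t = A * t ^ (1 / α + δ) := by
    rw [mul_assoc, ← rpow_add_one ht.ne', hδ]; ring_nf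
  rw [hKt, hεt] at hfwd hbwd
  have hA : 0 ≤ A := by positivity
  refine exp_neg_mul_sub_le_and_le_exp_mul_add (norm_nonneg _) ?_ ?_ ?_ hfwd hbwd
  · gcongr
    exact le_add_of_nonneg_right (by positivity)
  · gcongr
    exact le_add_of_nonneg_of_le hC₀.le (le_mul_of_one_le_right hA (one_le_exp (by positivity)))
  · rw [mul_right_comm]
    gcongr
    exact le_add_of_nonneg_of_le hC₀.le (by gcongr)

theorem approximate_flow_comparison
    (d : ℕ) (hd : 1 ≤ d) (α γ C₀ : ℝ)
    (hα : α ∈ Set.Ioo (0 : ℝ) 2) (hγ : γ ∈ Set.Ioc (0 : ℝ) 1) (hC₀ : 0 < C₀)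
    (b : Euc d → Euc d)
    (hb_bdd : ∀ x, ‖b x‖ ≤ C₀)
    (hb_hol : ∀ x y, ‖b x - b y‖ ≤ C₀ * ‖x - y‖ ^ γ)
    (hbal : 1 < α + γ)
    (δ : ℝ) (hδ : δ = 1 - 1 / α + γ / α) :
    ∀ T > (0 : ℝ), ∃ C > (0 : ℝ),
      ∀ t ∈ Set.Icc (0 : ℝ) T, ∀ s ∈ Set.Icc (0 : ℝ) t, ∀ x y : Euc d,
      ∀ u : ℝ → Euc d, IsSol d (fun τ z => moll d α b |τ - (t - s)| z) x u →
      ∀ θ : ℝ → Euc d, IsSol d (fun τ z => -moll d α b |τ| z) y θ →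
        Real.exp (-(C * t ^ δ)) * ‖x - θ t‖ - C * t ^ (1 / α + δ) ≤ ‖u (t - s) - θ s‖ ∧
        ‖u (t - s) - θ s‖ ≤ Real.exp (C * t ^ δ) * ‖x - θ t‖ + C * t ^ (1 / α + δ) :=
  approximate_flow_comparison_general d α γ C₀ hα hγ hC₀ b hb_bdd hb_hol hbal δ hδ
end

section
/- Let b : ℝ^d → ℝ^d be bounded and γ-Hölder continuous with γ ∈ (0,1], and define the Picard-type iterations υ_{0,t}(x) = x and υ_{k,t}(x) = x + ∫_0^t b(υ_{k−1,s}(x)) ds for k ≥ 1. Then for every T > 0 and every k ≥ 0 there exists C > 0 such that for every x ∈ ℝ^d, every solution υ_·(x) ∈ Υ(x) of dυ_t/dt = b(υ_t), υ_0 = x, and every t ∈ [0,T], one has |υ_{k,t}(x) − υ_t(x)| ≤ C t^{1 + γ + γ² + ⋯ + γ^k}. -/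
/-! Induction on `k`. The error of the `(k+1)`-st iterate is
`∫₀ᵗ (b(υ_{k,s}) - b(υ_s)) ds`, so Hölder continuity turns an error bound `C s ^ S` for the
`k`-th iterate into the integrand bound `C₀ C ^ γ s ^ (γ S)`, and integrating in time raises the
exponent to `γ S + 1`; starting from `|x - υ_t| ≤ C₀ t`, the exponents are `1 + γ + ⋯ + γ ^ k`. -/

open MeasureTheory Real Set

/-- The Picard-type iterations `υ_{0,t}(x) = x`,
`υ_{k,t}(x) = x + ∫_0^t b(υ_{k-1,s}(x)) ds`. -/
noncomputable def picard (d : ℕ) (b : Euc d → Euc d) (x : Euc d) : ℕ → ℝ → Euc d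
  | 0 => fun _ => x
  | (k + 1) => fun t => x + ∫ s in (0 : ℝ)..t, b (picard d b x k s)

open Filter Topology

lemma continuous_of_norm_sub_le_mul_rpow {E F : Type*} [SeminormedAddCommGroup E]
    [SeminormedAddCommGroup F] {f : E → F} {C r : ℝ} (hr : 0 < r)
    (hf : ∀ x y, ‖f x - f y‖ ≤ C * ‖x - y‖ ^ r) : Continuous f := by
  refine continuous_iff_continuousAt.2 fun x => tendsto_iff_norm_sub_tendsto_zero.2 ?_
  have hlim : Tendsto (fun y => C * ‖y - x‖ ^ r) (𝓝 x) (𝓝 0) := by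
    have := (((continuous_sub_right x).norm.rpow_const
      fun _ => Or.inr hr.le).const_mul C).tendsto x
    simpa [Real.zero_rpow hr.ne'] using this
  exact squeeze_zero (fun _ => norm_nonneg _) (fun y => hf y x) hlim

lemma norm_integral_le_mul_rpow_add_one {E : Type*} [NormedAddCommGroup E] [NormedSpace ℝ E]
    {f : ℝ → E} {K p t : ℝ} (hK : 0 ≤ K) (hp : 0 ≤ p) (ht : 0 ≤ t)
    (hf : ∀ s ∈ Icc 0 t, ‖f s‖ ≤ K * s ^ p) :
    ‖∫ s in (0 : ℝ)..t, f s‖ ≤ K * t ^ (p + 1) := by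
  have hp1 : -1 < p := by linarith
  calc ‖∫ s in (0 : ℝ)..t, f s‖ ≤ ∫ s in (0 : ℝ)..t, K * s ^ p :=
        intervalIntegral.norm_integral_le_of_norm_le ht
          (ae_of_all _ fun s hs => hf s (Ioc_subset_Icc_self hs))
          ((intervalIntegral.intervalIntegrable_rpow' hp1).const_mul K)
    _ = K * (t ^ (p + 1) / (p + 1)) := by
        rw [intervalIntegral.integral_const_mul, integral_rpow (Or.inl hp1),
          Real.zero_rpow (by linarith), sub_zero]
    _ ≤ K * t ^ (p + 1) := by
        gcongr
        exact div_le_self (by positivity) (by linarith)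

section Picard

variable {d : ℕ} {b : Euc d → Euc d} {x : Euc d} {υ : ℝ → Euc d}

lemma continuous_picard (hb : Continuous b) (x : Euc d) : ∀ k, Continuous (picard d b x k)
  | 0 => continuous_const
  | k + 1 => continuous_const.add <| intervalIntegral.continuous_primitive
      (fun _ _ => (hb.comp (continuous_picard hb x k)).intervalIntegrable _ _) 0

lemma IsSol.continuousOn (h : IsSol d (fun _ z => b z) x υ) : ContinuousOn υ (Ici 0) :=
  fun s hs => (h.2 s hs).continuousWithinAt

lemma IsSol.intervalIntegrable_comp (hb : Continuous b) (h : IsSol d (fun _ z => b z) x υ)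
    {t : ℝ} (ht : 0 ≤ t) : IntervalIntegrable (fun s => b (υ s)) volume 0 t :=
  ContinuousOn.intervalIntegrable <|
    hb.comp_continuousOn (h.continuousOn.mono (uIcc_of_le ht ▸ Icc_subset_Ici_self))

lemma IsSol.sub_eq_integral (hb : Continuous b) (h : IsSol d (fun _ z => b z) x υ)
    {t : ℝ} (ht : 0 ≤ t) : υ t - x = ∫ s in (0 : ℝ)..t, b (υ s) := by
  rw [intervalIntegral.integral_eq_sub_of_hasDeriv_right_of_le ht
    (h.continuousOn.mono Icc_subset_Ici_self)
    (fun s hs => (h.2 s hs.1.le).mono (Ioi_subset_Ici_self.trans (Ici_subset_Ici.2 hs.1.le)))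
    (h.intervalIntegrable_comp hb ht), h.1]

lemma picard_succ_sub_eq_integral (hb : Continuous b) (h : IsSol d (fun _ z => b z) x υ)
    (k : ℕ) {t : ℝ} (ht : 0 ≤ t) :
    picard d b x (k + 1) t - υ t = ∫ s in (0 : ℝ)..t, (b (picard d b x k s) - b (υ s)) := by
  have hk : IntervalIntegrable (fun s => b (picard d b x k s)) volume 0 t :=
    (hb.comp (continuous_picard hb x k)).intervalIntegrable _ _
  rw [intervalIntegral.integral_sub hk (h.intervalIntegrable_comp hb ht),
    ← h.sub_eq_integral hb ht, sub_sub_eq_add_sub, add_comm _ x]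
  rfl

theorem exists_norm_picard_sub_le {γ C₀ : ℝ} (hγ : 0 < γ) (hC₀ : 0 < C₀)
    (hb_bdd : ∀ x, ‖b x‖ ≤ C₀) (hb_hol : ∀ x y, ‖b x - b y‖ ≤ C₀ * ‖x - y‖ ^ γ) (k : ℕ) :
    ∃ C > (0 : ℝ), ∀ x υ, IsSol d (fun _ z => b z) x υ → ∀ t, 0 ≤ t →
      ‖picard d b x k t - υ t‖ ≤ C * t ^ (∑ j ∈ Finset.range (k + 1), γ ^ j) := by
  have hb : Continuous b := continuous_of_norm_sub_le_mul_rpow hγ hb_hol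
  induction k with
  | zero =>
    refine ⟨C₀, hC₀, fun x υ hυ t ht => ?_⟩
    have key := norm_integral_le_mul_rpow_add_one hC₀.le le_rfl ht
      (f := fun s => b (υ s)) fun s _ => by simpa using hb_bdd (υ s)
    rw [← hυ.sub_eq_integral hb ht, norm_sub_rev] at key
    simpa [picard] using key
  | succ k ih =>
    obtain ⟨C, hC, hCk⟩ := ih
    set S := ∑ j ∈ Finset.range (k + 1), γ ^ j
    have hS : 0 ≤ S := Finset.sum_nonneg fun j _ => pow_nonneg hγ.le j
    refine ⟨C₀ * C ^ γ, by positivity, fun x υ hυ t ht => ?_⟩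
    have hstep : ∀ s ∈ Icc 0 t,
        ‖b (picard d b x k s) - b (υ s)‖ ≤ C₀ * C ^ γ * s ^ (γ * S) := fun s hs =>
      calc ‖b (picard d b x k s) - b (υ s)‖
          ≤ C₀ * ‖picard d b x k s - υ s‖ ^ γ := hb_hol _ _
        _ ≤ C₀ * (C * s ^ S) ^ γ := by gcongr; exact hCk x υ hυ s hs.1
        _ = C₀ * C ^ γ * s ^ (γ * S) := by
          rw [Real.mul_rpow hC.le (Real.rpow_nonneg hs.1 S), ← Real.rpow_mul hs.1, mul_comm S,
            mul_assoc]
    rw [picard_succ_sub_eq_integral hb hυ k ht, geom_sum_succ]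
    exact norm_integral_le_mul_rpow_add_one (by positivity) (by positivity) ht hstep

end Picard

theorem picard_iteration_error_bound_general
    (d : ℕ) (γ C₀ : ℝ)
    (hγ : γ ∈ Set.Ioc (0 : ℝ) 1) (hC₀ : 0 < C₀)
    (b : Euc d → Euc d)
    (hb_bdd : ∀ x, ‖b x‖ ≤ C₀)
    (hb_hol : ∀ x y, ‖b x - b y‖ ≤ C₀ * ‖x - y‖ ^ γ) :
    ∀ T > (0 : ℝ), ∀ k : ℕ, ∃ C > (0 : ℝ), ∀ x : Euc d,
      ∀ υ : ℝ → Euc d, IsSol d (fun _ z => b z) x υ →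
      ∀ t ∈ Set.Icc (0 : ℝ) T,
        ‖picard d b x k t - υ t‖ ≤ C * t ^ (∑ j ∈ Finset.range (k + 1), γ ^ j) := by
  intro T _ k
  obtain ⟨C, hC, hbound⟩ := exists_norm_picard_sub_le hγ.1 hC₀ hb_bdd hb_hol k
  exact ⟨C, hC, fun x υ hυ t ht => hbound x υ hυ t ht.1⟩

theorem picard_iteration_error_bound
    (d : ℕ) (hd : 1 ≤ d) (γ C₀ : ℝ)
    (hγ : γ ∈ Set.Ioc (0 : ℝ) 1) (hC₀ : 0 < C₀)
    (b : Euc d → Euc d)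
    (hb_bdd : ∀ x, ‖b x‖ ≤ C₀)
    (hb_hol : ∀ x y, ‖b x - b y‖ ≤ C₀ * ‖x - y‖ ^ γ) :
    ∀ T > (0 : ℝ), ∀ k : ℕ, ∃ C > (0 : ℝ), ∀ x : Euc d,
      ∀ υ : ℝ → Euc d, IsSol d (fun _ z => b z) x υ →
      ∀ t ∈ Set.Icc (0 : ℝ) T,
        ‖picard d b x k t - υ t‖ ≤ C * t ^ (∑ j ∈ Finset.range (k + 1), γ ^ j) :=
  picard_iteration_error_bound_general d γ C₀ hγ hC₀ b hb_bdd hb_hol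
end
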